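/- arXiv:q-alg/9512033 — 2 statements merged into one kernel-verified Lean document; each statement's English description precedes it below -/
import Mathlib

section
/- Let ω ∈ W_n^1 be a woven braid of type (n) and let κ ∈ P_n be a pure braid. Then κ⁻¹ ω κ ∈ W_n^1 if and only if κ ∈ K_n. In particular, conjugation by elements of K_n maps W_n^1 into itself. -/
/-! Basic setup: the braid group `B_n` as a presented group.  Generators are
indexed by `ℕ`; the generator with index `i` represents `σ_i` for
`1 ≤ i ≤ n-1`, and all generators with index `0` or `≥ n` are trivialized. -/

/-- The relators of the braid group `B_n`. -/
def braidRels (n : ℕ) : Set (FreeGroup ℕ) :=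
  { r | (∃ i, 1 ≤ i ∧ i + 2 ≤ n ∧
          r = .of i * .of (i+1) * .of i * (.of (i+1) * .of i * .of (i+1))⁻¹) ∨
        (∃ i j, 1 ≤ i ∧ i + 2 ≤ j ∧ j + 1 ≤ n ∧
          r = .of i * .of j * (.of j * .of i)⁻¹) ∨
        (∃ i, (i = 0 ∨ n ≤ i) ∧ r = .of i) }

/-- The braid group on `n` strings. -/
abbrev BraidGroup (n : ℕ) := PresentedGroup (braidRels n)

/-- The standard generator `σ_i` of `B_n` (nontrivial for `1 ≤ i ≤ n-1`). -/
def σ (n i : ℕ) : BraidGroup n := PresentedGroup.of i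

/-- The transposition `(i, i+1)` of the strings `{1, …, n}`, as a permutation of `ℕ`. -/
def permOfGen (n i : ℕ) : Equiv.Perm ℕ :=
  if 1 ≤ i ∧ i + 1 ≤ n then Equiv.swap i (i+1) else 1

theorem braidRels_lift (n : ℕ) :
    ∀ r ∈ braidRels n, FreeGroup.lift (permOfGen n) r = 1 := by
  rintro r (⟨i, h1, h2, rfl⟩ | ⟨i, j, h1, h2, h3, rfl⟩ | ⟨i, hi, rfl⟩)
  · have e1 : permOfGen n i = Equiv.swap i (i+1) := if_pos ⟨h1, by omega⟩
    have e2 : permOfGen n (i+1) = Equiv.swap (i+1) (i+2) := if_pos ⟨by omega, by omega⟩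
    simp only [map_mul, map_inv, FreeGroup.lift_apply_of, e1, e2]
    rw [mul_inv_eq_one]
    have l : Equiv.swap i (i+1) * Equiv.swap (i+1) (i+2) * Equiv.swap i (i+1)
        = Equiv.swap i (i+2) := by
      have h := Equiv.swap_mul_swap_mul_swap
        (x := i+2) (y := i+1) (z := i) (by omega) (by omega)
      rwa [Equiv.swap_comm (i+1) i, Equiv.swap_comm (i+2) (i+1)] at h
    have r : Equiv.swap (i+1) (i+2) * Equiv.swap i (i+1) * Equiv.swap (i+1) (i+2)
        = Equiv.swap i (i+2) := by
      have h := Equiv.swap_mul_swap_mul_swap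
        (x := i) (y := i+1) (z := i+2) (by omega) (by omega)
      rwa [Equiv.swap_comm (i+2) i] at h
    rw [l, r]
  · have e1 : permOfGen n i = Equiv.swap i (i+1) := if_pos ⟨h1, by omega⟩
    have e2 : permOfGen n j = Equiv.swap j (j+1) := if_pos ⟨by omega, by omega⟩
    simp only [map_mul, map_inv, FreeGroup.lift_apply_of, e1, e2]
    rw [mul_inv_eq_one]
    have hd : (Equiv.swap i (i+1)).Disjoint (Equiv.swap j (j+1)) := by
      intro x
      rcases eq_or_ne x i with rfl | hxi
      · right; exact Equiv.swap_apply_of_ne_of_ne (by omega) (by omega)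
      rcases eq_or_ne x (i+1) with rfl | hxi1
      · right; exact Equiv.swap_apply_of_ne_of_ne (by omega) (by omega)
      · left; exact Equiv.swap_apply_of_ne_of_ne hxi hxi1
    exact hd.commute
  · have h : permOfGen n i = 1 := if_neg (by omega)
    simp [h]

/-- The canonical projection `Π : B_n → S_n`, sending `σ_i` to the
transposition `(i, i+1)` (strings are `1, …, n`, permutations of `ℕ`
fixing everything else). -/
def braidPerm (n : ℕ) : BraidGroup n →* Equiv.Perm ℕ :=
  PresentedGroup.toGroup (braidRels_lift n)

theorem braidPerm_σ (n i : ℕ) : braidPerm n (σ n i) = permOfGen n i :=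
  PresentedGroup.toGroup.of (braidRels_lift n)

/-- The pure braid group `P_n = ker Π`. -/
def PureBraid (n : ℕ) : Subgroup (BraidGroup n) := (braidPerm n).ker

/-- The standard pure braid generator
`A_{ij} = σ_{j-1} ⋯ σ_{i+1} σ_i² σ_{i+1}⁻¹ ⋯ σ_{j-1}⁻¹`. -/
def A (n i : ℕ) : ℕ → BraidGroup n
  | 0 => 1
  | j+1 => if j ≤ i then σ n i ^ 2 else σ n j * A n i j * (σ n j)⁻¹

/-- The group `P_n^j` of pure `j`-braids, generated by `A_{ij}` for `1 ≤ i < j`. -/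
def P (n j : ℕ) : Subgroup (BraidGroup n) :=
  Subgroup.closure ((fun i => A n i j) '' Set.Ico 1 j)

/-- Partial sums `N_1 = n_1, N_2 = n_1+n_2, …, N_k = n_1+⋯+n_k` of a list. -/
def partialSums : List ℕ → List ℕ
  | [] => []
  | a :: l => a :: (partialSums l).map (a + ·)

/-- The permutation braid `π_{n₁…n_k}`: the product `σ_1 σ_2 ⋯ σ_{n-1}` with the
letters `σ_{N_1}, …, σ_{N_{k-1}}` omitted. -/
def piBraid (n : ℕ) (ns : List ℕ) : BraidGroup n :=
  (((List.range n).filter fun i => decide (1 ≤ i ∧ i ∉ partialSums ns)).map (σ n)).prod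

/-- The permutation braid `π_n = σ_1 σ_2 ⋯ σ_{n-1}`. -/
def piN (n : ℕ) : BraidGroup n := piBraid n [n]

/-- A braid is woven of type `(n₁, …, n_k)` if it can be written as
`π_{n₁…n_k} β_{N_1} β_{N_2} ⋯ β_{N_k}` with each `β_{N_i} ∈ P_n^{N_i}`. -/
def IsWovenOfType (n : ℕ) (ns : List ℕ) (w : BraidGroup n) : Prop :=
  ∃ b : ℕ → BraidGroup n,
    (∀ m ∈ partialSums ns, b m ∈ P n m) ∧
    w = piBraid n ns * ((partialSums ns).map b).prod

/-- `W_n^1 = π_n P_n^n`, the set of woven braids of type `(n)`. -/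
def W1 (n : ℕ) : Set (BraidGroup n) := { w | ∃ b ∈ P n n, w = piN n * b }
theorem σ_sq_mem (n i : ℕ) : σ n i ^ 2 ∈ PureBraid n := by
  have h : braidPerm n (σ n i) ^ 2 = 1 := by
    rw [braidPerm_σ]
    unfold permOfGen
    split_ifs
    · rw [sq]; exact Equiv.swap_mul_self _ _
    · simp
  simpa [PureBraid, MonoidHom.mem_ker, map_pow] using h

theorem A_mem_pure (n i j : ℕ) : A n i j ∈ PureBraid n := by
  induction j with
  | zero => exact one_mem _
  | succ j ih =>
    show A n i (j+1) ∈ _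
    rw [A]
    split_ifs
    · exact σ_sq_mem n i
    · simp only [PureBraid, MonoidHom.mem_ker, map_mul, map_inv] at ih ⊢
      simp [ih]

/-- The generator `A_{ij}` as an element of the pure braid group `P_n`. -/
def Agen (n i j : ℕ) : ↥(PureBraid n) := ⟨A n i j, A_mem_pure n i j⟩

/-- `f` is the homomorphism `∇ : P_n → P_n` of the paper, determined by
`∇(A_{1j}) = 1` and `∇(A_{ij}) = A_{i-1,j-1}` for `i ≥ 2`. -/
def IsNabla (n : ℕ) (f : ↥(PureBraid n) →* ↥(PureBraid n)) : Prop :=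
  (∀ j, 1 < j → j ≤ n → f (Agen n 1 j) = 1) ∧
  (∀ i j, 2 ≤ i → i < j → j ≤ n → f (Agen n i j) = Agen n (i-1) (j-1))

/-- Conjugation by `π_n` as a homomorphism `P_n → P_n`, `α ↦ π_n α π_n⁻¹`. -/
def conjPiHom (n : ℕ) : ↥(PureBraid n) →* ↥(PureBraid n) where
  toFun α := ⟨piN n * ↑α * (piN n)⁻¹,
    Subgroup.Normal.conj_mem (MonoidHom.normal_ker _) ↑α α.2 (piN n)⟩
  map_one' := by ext; simp
  map_mul' a b := by ext; push_cast; group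

/-- The product `β ∇(β) ∇²(β) ⋯ ∇^{m-1}(β)`. -/
def weave (n : ℕ) (f : ↥(PureBraid n) →* ↥(PureBraid n)) (m : ℕ)
    (β : ↥(PureBraid n)) : ↥(PureBraid n) :=
  ((List.range m).map fun t => (⇑f)^[t] β).prod

/-- The set `K_n = { β ∇(β) ∇²(β) ⋯ ∇^{n-2}(β) : β ∈ P_n^n }`. -/
def Kset (n : ℕ) (f : ↥(PureBraid n) →* ↥(PureBraid n)) : Set ↥(PureBraid n) :=
  { k | ∃ β : ↥(PureBraid n), (β : BraidGroup n) ∈ P n n ∧ k = weave n f (n-1) β }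

/-!
Put `N = P_n^n` and `φ(α) = π_n⁻¹ α π_n`. Since `P_n` normalizes `N`, for `β ∈ N` the braid
`κ⁻¹ π_n β κ` lies in `π_n N` iff `φ(κ⁻¹) κ ∈ N`. On the generators `A_{ij}` of `P_n`, `∇` agrees
with `φ` modulo `N` (`π_n⁻¹ A_{1j} π_n ∈ N` and `π_n⁻¹ A_{ij} π_n = A_{i-1,j-1}` for `i ≥ 2`),
hence on all of `P_n`; this is where the generation of `P_n` by the `A_{ij}` (combing) enters.
So the condition reads `κ ∇(κ)⁻¹ ∈ N`, i.e. `κ = β ∇(κ)` with `β ∈ N`, and since `∇^{n-1} = 1`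
iterating this gives `κ = β ∇(β) ⋯ ∇^{n-2}(β)`; conversely such a `κ` satisfies `κ = β ∇(κ)`.
-/

section TwistedProduct

variable {H : Type*} [Group H] (f : H →* H)

theorem prod_range_map_iterate_mul_inv_map (m : ℕ) (κ : H) :
    ((List.range m).map fun t => f^[t] (κ * (f κ)⁻¹)).prod = κ * (f^[m] κ)⁻¹ := by
  have h : (fun t => f^[t] (κ * (f κ)⁻¹)) = fun t => f^[t] κ / f^[t + 1] κ := by
    funext t
    rw [iterate_map_mul, iterate_map_inv, Function.iterate_succ_apply, div_eq_mul_inv]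
  rw [h, List.prod_range_div', Function.iterate_zero_apply, div_eq_mul_inv]

theorem mul_map_prod_range_map_iterate (m : ℕ) (β : H) :
    β * f ((List.range m).map fun t => f^[t] β).prod =
      ((List.range (m + 1)).map fun t => f^[t] β).prod := by
  simp only [List.prod_range_succ', map_list_prod, List.map_map, Function.comp_def,
    Function.iterate_zero_apply, Function.iterate_succ_apply']

theorem mul_inv_map_mem_iff_exists_prod_iterate {m : ℕ} (hf : ∀ x, f^[m] x = 1)
    (N : Subgroup H) (κ : H) :
    κ * (f κ)⁻¹ ∈ N ↔ ∃ β ∈ N, κ = ((List.range m).map fun t => f^[t] β).prod := by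
  constructor
  · intro hκ
    refine ⟨_, hκ, ?_⟩
    rw [prod_range_map_iterate_mul_inv_map, hf, inv_one, mul_one]
  · rintro ⟨β, hβ, rfl⟩
    have hshift : β * f ((List.range m).map fun t => f^[t] β).prod =
        ((List.range m).map fun t => f^[t] β).prod := by
      rw [mul_map_prod_range_map_iterate, List.prod_range_succ, hf, mul_one]
    rwa [mul_inv_eq_iff_eq_mul.mpr hshift.symm]

end TwistedProduct

section Conjugation

variable {G : Type*} [Group G]

theorem Commute.conj_conj {x y : G} (h : Commute x y) (a : G) :
    x * (y * a * y⁻¹) * x⁻¹ = y * (x * a * x⁻¹) * y⁻¹ := by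
  simp only [← MulAut.conj_apply, ← MulAut.mul_apply, ← map_mul, h.eq]

theorem inv_conj_eq_of_conj_eq {g x y : G} (h : g * y * g⁻¹ = x) : g⁻¹ * x * g = y := by
  rw [← h]; group

theorem conj_mem_of_forall_mem_closure {s : Set G} {K : Subgroup G} {g x : G}
    (hs : ∀ y ∈ s, g * y * g⁻¹ ∈ K) (hx : x ∈ Subgroup.closure s) :
    g * x * g⁻¹ ∈ K :=
  (Subgroup.closure_le (K.comap (MulAut.conj g).toMonoidHom)).mpr hs hx

theorem mem_normalizer_closure {s : Set G} {g : G}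
    (h₁ : ∀ x ∈ s, g * x * g⁻¹ ∈ Subgroup.closure s)
    (h₂ : ∀ x ∈ s, g⁻¹ * x * g ∈ Subgroup.closure s) :
    g ∈ Subgroup.normalizer (Subgroup.closure s : Set G) := by
  refine Subgroup.mem_normalizer_iff.mpr fun x =>
    ⟨conj_mem_of_forall_mem_closure h₁, fun hx => ?_⟩
  simpa [mul_assoc] using conj_mem_of_forall_mem_closure (g := g⁻¹) (by simpa using h₂) hx

end Conjugation

section Relations

variable {n : ℕ}

theorem σ_eq_one {i : ℕ} (h : i = 0 ∨ n ≤ i) : σ n i = 1 :=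
  PresentedGroup.one_of_mem (Or.inr (Or.inr ⟨i, h, rfl⟩))

theorem σ_braid {i : ℕ} (h1 : 1 ≤ i) (h2 : i + 2 ≤ n) :
    σ n i * σ n (i+1) * σ n i = σ n (i+1) * σ n i * σ n (i+1) :=
  mul_inv_eq_one.mp (PresentedGroup.one_of_mem (Or.inl ⟨i, h1, h2, rfl⟩))

theorem commute_σ {i j : ℕ} (h : i + 2 ≤ j) : Commute (σ n i) (σ n j) := by
  rcases Nat.eq_zero_or_pos i with rfl | hi
  · rw [σ_eq_one (Or.inl rfl)]; exact Commute.one_left _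
  rcases le_or_gt n j with hj | hj
  · rw [σ_eq_one (Or.inr hj)]; exact Commute.one_right _
  · exact mul_inv_eq_one.mp
      (PresentedGroup.one_of_mem (Or.inr (Or.inl ⟨i, j, hi, h, hj, rfl⟩)))

theorem σ_conj_σ_succ {i : ℕ} (h1 : 1 ≤ i) (h2 : i + 2 ≤ n) :
    σ n i * σ n (i+1) * (σ n i)⁻¹ = (σ n (i+1))⁻¹ * σ n i * σ n (i+1) := by
  calc σ n i * σ n (i+1) * (σ n i)⁻¹
      = (σ n (i+1))⁻¹ * (σ n (i+1) * σ n i * σ n (i+1)) * (σ n i)⁻¹ := by group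
    _ = (σ n (i+1))⁻¹ * σ n i * σ n (i+1) := by rw [← σ_braid h1 h2]; group

theorem braidPerm_σ_apply_of_ne {t p : ℕ} (h1 : p ≠ t) (h2 : p ≠ t+1) :
    braidPerm n (σ n t) p = p := by
  rw [braidPerm_σ, permOfGen]
  split_ifs
  · exact Equiv.swap_apply_of_ne_of_ne h1 h2
  · rfl

end Relations

section Generators

variable {n : ℕ}

theorem A_succ_of_lt {i j : ℕ} (h : i < j) :
    A n i (j+1) = σ n j * A n i j * (σ n j)⁻¹ := by
  rw [A, if_neg (by omega)]

theorem A_self_succ (i : ℕ) : A n i (i+1) = σ n i ^ 2 := by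
  rw [A, if_pos le_rfl]

theorem A_mem_P {i j : ℕ} (hi : 1 ≤ i) (hij : i < j) : A n i j ∈ P n j :=
  Subgroup.subset_closure ⟨i, Set.mem_Ico.mpr ⟨hi, hij⟩, rfl⟩

theorem P_le_pureBraid (j : ℕ) : P n j ≤ PureBraid n := by
  rw [P, Subgroup.closure_le]
  rintro x ⟨i, _, rfl⟩
  exact A_mem_pure n i j

theorem commute_σ_A_of_add_two_le {k i : ℕ} (h : k + 2 ≤ i) (j : ℕ) :
    Commute (σ n k) (A n i j) := by
  induction j with
  | zero => exact Commute.one_right _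
  | succ j ih =>
    rw [A]
    split_ifs
    · exact (commute_σ h).pow_right 2
    · exact ((commute_σ (by omega)).mul_right ih).mul_right (commute_σ (by omega)).inv_right

theorem commute_σ_A_of_lt {k i j : ℕ} (hij : i < j) (h : j + 1 ≤ k) :
    Commute (σ n k) (A n i j) := by
  induction j with
  | zero => exact Commute.one_right _
  | succ j ih =>
    rw [A]
    split_ifs
    · obtain rfl : i = j := by omega
      exact (commute_σ (by omega)).symm.pow_right 2
    · have hc : Commute (σ n k) (σ n j) := (commute_σ (by omega)).symm
      exact (hc.mul_right (ih (by omega) (by omega))).mul_right hc.inv_right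

theorem σ_conj_A_of_lt_of_lt {k i j : ℕ} (hi : 1 ≤ i) (hk : i < k) (hkj : k + 2 ≤ j)
    (hjn : j ≤ n) : σ n k * A n i j * (σ n k)⁻¹ = A n i j := by
  induction j, hkj using Nat.le_induction with
  | base =>
    have hA : σ n (k+1) * A n i k * (σ n (k+1))⁻¹ = A n i k := by
      rw [(commute_σ_A_of_lt hk le_rfl).eq, mul_inv_cancel_right]
    rw [A_succ_of_lt (by omega), A_succ_of_lt hk]
    calc σ n k * (σ n (k+1) * (σ n k * A n i k * (σ n k)⁻¹) * (σ n (k+1))⁻¹) *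
          (σ n k)⁻¹
        = (σ n k * σ n (k+1) * σ n k) * A n i k * (σ n k * σ n (k+1) * σ n k)⁻¹ := by
          group
      _ = σ n (k+1) * (σ n k * (σ n (k+1) * A n i k * (σ n (k+1))⁻¹) * (σ n k)⁻¹) *
            (σ n (k+1))⁻¹ := by
          rw [σ_braid (by omega) (by omega)]; group
      _ = σ n (k+1) * (σ n k * A n i k * (σ n k)⁻¹) * (σ n (k+1))⁻¹ := by rw [hA]
  | succ j hj ih =>
    rw [A_succ_of_lt (by omega), (commute_σ (by omega)).conj_conj, ih (by omega)]

theorem σ_conj_A_self {i j : ℕ} (hi : 1 ≤ i) (hij : i + 2 ≤ j) (hjn : j ≤ n) :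
    σ n i * A n i j * (σ n i)⁻¹ = A n (i+1) j := by
  induction j, hij using Nat.le_induction with
  | base =>
    rw [A_succ_of_lt (by omega), A_self_succ, A_self_succ]
    calc σ n i * (σ n (i+1) * σ n i ^ 2 * (σ n (i+1))⁻¹) * (σ n i)⁻¹
        = (σ n i * σ n (i+1) * σ n i) * (σ n i * σ n (i+1) * (σ n i)⁻¹)⁻¹ := by
          rw [sq]; group
      _ = (σ n (i+1) * σ n i * σ n (i+1)) * ((σ n (i+1))⁻¹ * σ n i * σ n (i+1))⁻¹ := by
          rw [σ_braid hi (by omega), σ_conj_σ_succ hi (by omega)]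
      _ = σ n (i+1) ^ 2 := by rw [sq]; group
  | succ j hj ih =>
    rw [A_succ_of_lt (by omega), (commute_σ (by omega)).conj_conj, ih (by omega),
      A_succ_of_lt (by omega)]

theorem σ_conj_A_succ {k j : ℕ} (hk : 1 ≤ k) (hkj : k + 2 ≤ j) (hjn : j ≤ n) :
    σ n k * A n (k+1) j * (σ n k)⁻¹ = (A n (k+1) j)⁻¹ * A n k j * A n (k+1) j := by
  induction j, hkj using Nat.le_induction with
  | base =>
    rw [A_succ_of_lt (show k < k + 1 by omega), A_self_succ (k+1), A_self_succ]
    calc σ n k * σ n (k+1) ^ 2 * (σ n k)⁻¹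
        = (σ n k * σ n (k+1) * (σ n k)⁻¹) * (σ n k * σ n (k+1) * (σ n k)⁻¹) := by
          rw [sq]; group
      _ = ((σ n (k+1))⁻¹ * σ n k * σ n (k+1)) *
            ((σ n (k+1))⁻¹ * σ n k * σ n (k+1)) := by
          rw [σ_conj_σ_succ hk (by omega)]
      _ = (σ n (k+1) ^ 2)⁻¹ * (σ n (k+1) * σ n k ^ 2 * (σ n (k+1))⁻¹) *
            σ n (k+1) ^ 2 := by
          rw [sq, sq]; group
  | succ j hj ih =>
    rw [A_succ_of_lt (by omega), (commute_σ (by omega)).conj_conj, ih (by omega),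
      A_succ_of_lt (show k < j by omega)]
    group

theorem σ_mem_normalizer_P {t j : ℕ} (ht : 1 ≤ t) (htj : t + 2 ≤ j) (hj : j ≤ n) :
    σ n t ∈ Subgroup.normalizer (P n j : Set (BraidGroup n)) := by
  apply mem_normalizer_closure
  · rintro _ ⟨i, ⟨hi, hij⟩, rfl⟩
    rcases lt_trichotomy i t with h | rfl | h
    · rw [σ_conj_A_of_lt_of_lt hi h htj hj]; exact A_mem_P hi hij
    · rw [σ_conj_A_self hi htj hj]; exact A_mem_P (by omega) (by omega)
    rcases Nat.lt_or_ge (t+1) i with h' | h'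
    · rw [(commute_σ_A_of_add_two_le h' j).eq, mul_inv_cancel_right]; exact A_mem_P hi hij
    obtain rfl : i = t + 1 := by omega
    rw [σ_conj_A_succ ht htj hj]
    exact mul_mem (mul_mem (inv_mem (A_mem_P hi hij)) (A_mem_P ht (by omega))) (A_mem_P hi hij)
  · rintro _ ⟨i, ⟨hi, hij⟩, rfl⟩
    rcases lt_trichotomy i t with h | rfl | h
    · rw [inv_conj_eq_of_conj_eq (σ_conj_A_of_lt_of_lt hi h htj hj)]; exact A_mem_P hi hij
    · have hconj :
          σ n i * (A n i j * A n (i+1) j * (A n i j)⁻¹) * (σ n i)⁻¹ = A n i j := by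
        have e : σ n i * (A n i j * A n (i+1) j * (A n i j)⁻¹) * (σ n i)⁻¹ =
            (σ n i * A n i j * (σ n i)⁻¹) * (σ n i * A n (i+1) j * (σ n i)⁻¹) *
              (σ n i * A n i j * (σ n i)⁻¹)⁻¹ := by group
        rw [e, σ_conj_A_self hi htj hj, σ_conj_A_succ hi htj hj]; group
      rw [inv_conj_eq_of_conj_eq hconj]
      exact mul_mem (mul_mem (A_mem_P hi hij) (A_mem_P (by omega) (by omega)))
        (inv_mem (A_mem_P hi hij))
    rcases Nat.lt_or_ge (t+1) i with h' | h'
    · rw [(commute_σ_A_of_add_two_le h' j).inv_left.eq, inv_mul_cancel_right]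
      exact A_mem_P hi hij
    obtain rfl : i = t + 1 := by omega
    rw [inv_conj_eq_of_conj_eq (σ_conj_A_self ht htj hj)]
    exact A_mem_P ht (by omega)

theorem σ_inv_conj_mem_P_succ {j : ℕ} {x : BraidGroup n} (hx : x ∈ P n j) :
    (σ n j)⁻¹ * x * σ n j ∈ P n (j+1) := by
  simpa using conj_mem_of_forall_mem_closure (g := (σ n j)⁻¹) (K := P n (j+1)) (by
    rintro _ ⟨i, ⟨hi, hij⟩, rfl⟩
    have e : (σ n j)⁻¹ * A n i j * ((σ n j)⁻¹)⁻¹ =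
        (A n j (j+1))⁻¹ * A n i (j+1) * A n j (j+1) := by
      rw [A_self_succ, A_succ_of_lt hij, sq]; group
    rw [e]
    exact mul_mem (mul_mem (inv_mem (A_mem_P (by omega) (by omega))) (A_mem_P hi (by omega)))
      (A_mem_P (by omega) (by omega))) hx

end Generators

section PermutationBraid

variable {n : ℕ}

def sigmaAsc (n : ℕ) : ℕ → BraidGroup n
  | 0 => 1
  | j+1 => sigmaAsc n j * σ n (j+1)

theorem piN_eq_sigmaAsc : piN n = sigmaAsc n (n - 1) := by
  have hfilter : (List.range n).filter (fun i => decide (1 ≤ i ∧ i ∉ partialSums [n])) =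
      List.range' 1 (n - 1) := by
    cases n with
    | zero => rfl
    | succ n =>
      rw [List.range_eq_range', List.range'_succ, List.filter_cons_of_neg (by simp),
        List.filter_eq_self.mpr]
      · rfl
      · intro i hi
        simp only [List.mem_range'_1] at hi
        simp [partialSums]
        omega
  have hprod : ∀ m, ((List.range' 1 m).map (σ n)).prod = sigmaAsc n m := by
    intro m
    induction m with
    | zero => rfl
    | succ m ih =>
      rw [List.range'_concat, List.map_append, List.prod_append, ih, sigmaAsc, add_comm]
      simp
  rw [piN, piBraid, hfilter, hprod]

theorem commute_σ_sigmaAsc {k m : ℕ} (h : m + 2 ≤ k) : Commute (σ n k) (sigmaAsc n m) := by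
  induction m with
  | zero => exact Commute.one_right _
  | succ m ih => exact (ih (by omega)).mul_right (commute_σ (by omega)).symm

theorem sigmaAsc_mul_σ {i j : ℕ} (hi : 1 ≤ i) (hij : i + 1 ≤ j) (hj : j + 1 ≤ n) :
    sigmaAsc n j * σ n i = σ n (i+1) * sigmaAsc n j := by
  induction j, hij using Nat.le_induction with
  | base =>
    obtain ⟨m, rfl⟩ : ∃ m, i = m + 1 := ⟨i - 1, by omega⟩
    have hc : Commute (σ n (m+2)) (sigmaAsc n m) := commute_σ_sigmaAsc le_rfl
    calc sigmaAsc n (m+2) * σ n (m+1)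
        = sigmaAsc n m * (σ n (m+1) * σ n (m+2) * σ n (m+1)) := by
          rw [sigmaAsc, sigmaAsc]; group
      _ = (sigmaAsc n m * σ n (m+2)) * (σ n (m+1) * σ n (m+2)) := by
          rw [σ_braid (by omega) (by omega)]; group
      _ = σ n (m+2) * sigmaAsc n (m+2) := by rw [← hc.eq, sigmaAsc, sigmaAsc]; group
  | succ j hj ih =>
    calc sigmaAsc n (j+1) * σ n i = (sigmaAsc n j * σ n i) * σ n (j+1) := by
          rw [sigmaAsc, mul_assoc, ← (commute_σ (n := n) (show i + 2 ≤ j + 1 by omega)).eq,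
            mul_assoc]
      _ = σ n (i+1) * sigmaAsc n (j+1) := by rw [ih (by omega), sigmaAsc, mul_assoc]

theorem piN_conj_σ {i : ℕ} (hi : 1 ≤ i) (h : i + 2 ≤ n) :
    piN n * σ n i * (piN n)⁻¹ = σ n (i+1) := by
  rw [piN_eq_sigmaAsc, sigmaAsc_mul_σ hi (by omega) (by omega), mul_inv_cancel_right]

theorem piN_conj_A {i j : ℕ} (hi : 1 ≤ i) (hij : i < j) (hj : j + 1 ≤ n) :
    piN n * A n i j * (piN n)⁻¹ = A n (i+1) (j+1) := by
  induction j, hij using Nat.le_induction with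
  | base =>
    rw [A_self_succ, A_self_succ, sq, sq, ← piN_conj_σ hi (by omega)]
    group
  | succ j hj ih =>
    rw [A_succ_of_lt (by omega), A_succ_of_lt (by omega), ← ih (by omega),
      ← piN_conj_σ (show 1 ≤ j by omega) (by omega)]
    group

theorem sigmaAsc_inv_conj_σ_one_sq_mem (k : ℕ) :
    (sigmaAsc n (k+1))⁻¹ * σ n 1 ^ 2 * sigmaAsc n (k+1) ∈ P n (k+2) := by
  induction k with
  | zero =>
    rw [show (sigmaAsc n 1)⁻¹ * σ n 1 ^ 2 * sigmaAsc n 1 = A n 1 2 by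
      rw [A_self_succ, sigmaAsc, sigmaAsc]; group]
    exact A_mem_P le_rfl one_lt_two
  | succ k ih =>
    simpa [sigmaAsc, mul_assoc] using σ_inv_conj_mem_P_succ ih

theorem piN_inv_conj_A_one_mem {j : ℕ} (hj2 : 2 ≤ j) (hjn : j ≤ n) :
    (piN n)⁻¹ * A n 1 j * piN n ∈ P n n := by
  induction j, hj2 using Nat.le_induction with
  | base =>
    obtain ⟨k, rfl⟩ : ∃ k, n = k + 2 := ⟨n - 2, by omega⟩
    simpa [A_self_succ, piN_eq_sigmaAsc] using sigmaAsc_inv_conj_σ_one_sq_mem (n := k + 2) k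
  | succ j hj ih =>
    have hσ : (piN n)⁻¹ * σ n j * piN n = σ n (j-1) := by
      refine inv_conj_eq_of_conj_eq ?_
      rw [piN_conj_σ (by omega) (by omega), Nat.sub_add_cancel (by omega)]
    have e : (piN n)⁻¹ * A n 1 (j+1) * piN n =
        σ n (j-1) * ((piN n)⁻¹ * A n 1 j * piN n) * (σ n (j-1))⁻¹ := by
      rw [A_succ_of_lt (by omega), ← hσ]; group
    rw [e]
    exact (Subgroup.mem_normalizer_iff.mp (σ_mem_normalizer_P (by omega) (by omega) le_rfl) _).mp
      (ih (by omega))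

end PermutationBraid

section Generation

variable {n : ℕ}

def sigmaClosure (n m : ℕ) : Subgroup (BraidGroup n) :=
  Subgroup.closure (σ n '' Set.Ico 1 m)

/-- For `r < j` these represent the right cosets of `⟨σ_1, …, σ_{j-2}⟩ P_n^j`
in `⟨σ_1, …, σ_{j-1}⟩`. -/
def sigmaDesc (n j : ℕ) : ℕ → BraidGroup n
  | 0 => 1
  | r+1 => sigmaDesc n j r * σ n (j - (r+1))

theorem σ_mem_sigmaClosure {k m : ℕ} (hk : 1 ≤ k) (hkm : k < m) :
    σ n k ∈ sigmaClosure n m :=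
  Subgroup.subset_closure ⟨k, ⟨hk, hkm⟩, rfl⟩

theorem sigmaClosure_mono {m m' : ℕ} (h : m ≤ m') : sigmaClosure n m ≤ sigmaClosure n m' :=
  Subgroup.closure_mono (Set.image_mono (Set.Ico_subset_Ico le_rfl h))

theorem sigmaClosure_self : sigmaClosure n n = ⊤ := by
  rw [eq_top_iff, ← PresentedGroup.closure_range_of (braidRels n), Subgroup.closure_le]
  rintro _ ⟨i, rfl⟩
  by_cases h : 1 ≤ i ∧ i < n
  · exact σ_mem_sigmaClosure h.1 h.2
  · rw [← σ, σ_eq_one (by omega)]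
    exact one_mem _

theorem A_mem_sigmaClosure {i j : ℕ} (hi : 1 ≤ i) (hij : i < j) :
    A n i j ∈ sigmaClosure n j := by
  induction j, hij using Nat.le_induction with
  | base => rw [A_self_succ]; exact pow_mem (σ_mem_sigmaClosure hi (by omega)) 2
  | succ j hj ih =>
    rw [A_succ_of_lt (by omega)]
    have hσ := σ_mem_sigmaClosure (n := n) (show 1 ≤ j by omega) (Nat.lt_succ_self j)
    exact mul_mem (mul_mem hσ (sigmaClosure_mono (Nat.le_succ j) ih)) (inv_mem hσ)

theorem sigmaClosure_le_normalizer_P {j : ℕ} (hj : j ≤ n) :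
    sigmaClosure n (j-1) ≤ Subgroup.normalizer (P n j : Set (BraidGroup n)) := by
  rw [sigmaClosure, Subgroup.closure_le]
  rintro _ ⟨t, ⟨ht, htj⟩, rfl⟩
  exact σ_mem_normalizer_P ht (by omega) hj

theorem sigmaClosure_sup_P_le_stabilizer {j : ℕ} :
    sigmaClosure n (j-1) ⊔ P n j ≤
      (MulAction.stabilizer (Equiv.Perm ℕ) j).comap (braidPerm n) := by
  refine sup_le ?_ ((P_le_pureBraid j).trans fun g hg => ?_)
  · rw [sigmaClosure, Subgroup.closure_le]
    rintro _ ⟨t, ⟨ht, htj⟩, rfl⟩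
    exact braidPerm_σ_apply_of_ne (by omega) (by omega)
  · simp [MonoidHom.mem_ker.mp hg]

theorem sigmaDesc_succ_shift (j r : ℕ) :
    sigmaDesc n (j+1) (r+1) = σ n j * sigmaDesc n j r := by
  induction r with
  | zero => simp [sigmaDesc]
  | succ r ih =>
    rw [sigmaDesc, ih, sigmaDesc, show j + 1 - (r + 1 + 1) = j - (r + 1) by omega, mul_assoc]

theorem A_eq_sigmaDesc_conj {i : ℕ} (r : ℕ) :
    A n i (i+r+1) = sigmaDesc n (i+r+1) r * σ n i ^ 2 * (sigmaDesc n (i+r+1) r)⁻¹ := by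
  induction r with
  | zero => simp [sigmaDesc, A_self_succ]
  | succ r ih =>
    rw [show i + (r+1) + 1 = i + r + 1 + 1 by omega, A_succ_of_lt (by omega), ih,
      sigmaDesc_succ_shift]
    group

theorem commute_σ_sigmaDesc {k j r : ℕ} (h : k + 2 ≤ j - r) :
    Commute (σ n k) (sigmaDesc n j r) := by
  induction r with
  | zero => exact Commute.one_right _
  | succ r ih => exact (ih (by omega)).mul_right (commute_σ (by omega))

theorem sigmaDesc_mul_σ_of_lt {j k r : ℕ} (hk2 : 2 ≤ k) (hkj : k < j) (hjn : j ≤ n)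
    (hr : j - k + 1 ≤ r) (hrj : r < j) :
    sigmaDesc n j r * σ n k = σ n (k-1) * sigmaDesc n j r := by
  induction r, hr using Nat.le_induction with
  | base =>
    obtain ⟨s, rfl⟩ : ∃ s, j = k + s + 1 := ⟨j - k - 1, by omega⟩
    rw [show k + s + 1 - k + 1 = s + 2 by omega]
    have e : sigmaDesc n (k+s+1) (s+2) = sigmaDesc n (k+s+1) s * σ n k * σ n (k-1) := by
      rw [sigmaDesc, sigmaDesc, show k+s+1-(s+1+1) = k-1 by omega,
        show k+s+1-(s+1) = k by omega]
    have hc : Commute (σ n (k-1)) (sigmaDesc n (k+s+1) s) := commute_σ_sigmaDesc (by omega)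
    have hb := σ_braid (n := n) (i := k-1) (by omega) (by omega)
    rw [Nat.sub_add_cancel (by omega)] at hb
    calc sigmaDesc n (k+s+1) (s+2) * σ n k
        = sigmaDesc n (k+s+1) s * (σ n (k-1) * σ n k * σ n (k-1)) := by rw [e, hb]; group
      _ = (σ n (k-1) * sigmaDesc n (k+s+1) s) * (σ n k * σ n (k-1)) := by rw [hc.eq]; group
      _ = σ n (k-1) * sigmaDesc n (k+s+1) (s+2) := by rw [e]; group
  | succ r hr ih =>
    have hc : Commute (σ n (j-(r+1))) (σ n k) := commute_σ (by omega)
    rw [sigmaDesc, mul_assoc, hc.eq, ← mul_assoc, ih (by omega), mul_assoc]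

theorem braidPerm_sigmaDesc {j r : ℕ} (hr : 1 ≤ r) (hrj : r < j) (hjn : j ≤ n) :
    braidPerm n (sigmaDesc n j r) j = j - 1 := by
  induction r, hr using Nat.le_induction with
  | base =>
    rw [sigmaDesc, sigmaDesc, one_mul, braidPerm_σ, permOfGen, if_pos (by omega),
      Nat.sub_add_cancel (by omega), Equiv.swap_apply_right]
  | succ r hr ih =>
    rw [sigmaDesc, map_mul, Equiv.Perm.mul_apply,
      braidPerm_σ_apply_of_ne (by omega) (by omega), ih (by omega)]

/-- Right multiplication by `σ_k` permutes the cosets represented by the `sigmaDesc n j r`,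
exchanging those with `r = j - k - 1` and `r = j - k`. -/
theorem sigmaDesc_mul_σ_mul_inv_mem {j k r : ℕ} (hk : 1 ≤ k) (hkj : k < j) (hj : j ≤ n)
    (hr : r < j) :
    sigmaDesc n j r * σ n k * (sigmaDesc n j (Equiv.swap (j-k-1) (j-k) r))⁻¹ ∈
      sigmaClosure n (j-1) ⊔ P n j := by
  rcases lt_trichotomy (r + k + 1) j with h | h | h
  · rw [Equiv.swap_apply_of_ne_of_ne (by omega) (by omega),
      ← (commute_σ_sigmaDesc (by omega)).eq, mul_inv_cancel_right]
    exact Subgroup.mem_sup_left (σ_mem_sigmaClosure hk (by omega))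
  · rw [show j - k - 1 = r by omega, show j - k = r + 1 by omega, Equiv.swap_apply_left,
      sigmaDesc, show j - (r + 1) = k by omega, mul_inv_cancel]
    exact one_mem _
  rcases Nat.lt_or_ge j (r + k) with h' | h'
  swap
  · obtain ⟨s, rfl⟩ : ∃ s, r = s + 1 := ⟨r - 1, by omega⟩
    rw [show j - k - 1 = s by omega, show j - k = s + 1 by omega, Equiv.swap_apply_right,
      sigmaDesc, show j - (s + 1) = k by omega]
    have hA := A_eq_sigmaDesc_conj (n := n) (i := k) s
    rw [show k + s + 1 = j by omega, sq] at hA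
    rw [show sigmaDesc n j s * σ n k * σ n k * (sigmaDesc n j s)⁻¹ = A n k j by rw [hA]; group]
    exact Subgroup.mem_sup_right (A_mem_P hk hkj)
  · rw [Equiv.swap_apply_of_ne_of_ne (by omega) (by omega),
      sigmaDesc_mul_σ_of_lt (by omega) hkj hj (by omega) hr, mul_inv_cancel_right]
    exact Subgroup.mem_sup_left (σ_mem_sigmaClosure (by omega) (by omega))

theorem exists_mul_sigmaDesc_inv_mem {j : ℕ} (hj1 : 1 ≤ j) (hj : j ≤ n) {g : BraidGroup n}
    (hg : g ∈ sigmaClosure n j) :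
    ∃ r < j, g * (sigmaDesc n j r)⁻¹ ∈ sigmaClosure n (j-1) ⊔ P n j := by
  have hswap_lt : ∀ k r, 1 ≤ k → r < j → Equiv.swap (j-k-1) (j-k) r < j := by
    intro k r hk hr
    rw [Equiv.swap_apply_def]
    split_ifs <;> omega
  induction hg using Subgroup.closure_induction_right with
  | one => exact ⟨0, hj1, by simp [sigmaDesc]⟩
  | mul_right x _ y hy ih =>
    obtain ⟨k, ⟨hk, hkj⟩, rfl⟩ := hy
    obtain ⟨r, hr, hx⟩ := ih
    refine ⟨_, hswap_lt k r hk hr, ?_⟩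
    simpa [mul_assoc] using mul_mem hx (sigmaDesc_mul_σ_mul_inv_mem hk hkj hj hr)
  | mul_inv_cancel x _ y hy ih =>
    obtain ⟨k, ⟨hk, hkj⟩, rfl⟩ := hy
    obtain ⟨r, hr, hx⟩ := ih
    have h := sigmaDesc_mul_σ_mul_inv_mem (n := n) hk hkj hj (hswap_lt k r hk hr)
    rw [Equiv.swap_apply_self] at h
    refine ⟨_, hswap_lt k r hk hr, ?_⟩
    simpa [mul_assoc] using mul_mem hx (inv_mem h)

end Generation

section PureGenerators

variable {n : ℕ}

def pureGens (n : ℕ) : Set ↥(PureBraid n) :=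
  {x | ∃ i j, 1 ≤ i ∧ i < j ∧ j ≤ n ∧ Agen n i j = x}

theorem P_le_map_closure_pureGens {j : ℕ} (hj : j ≤ n) :
    P n j ≤ (Subgroup.closure (pureGens n)).map (PureBraid n).subtype := by
  rw [P, Subgroup.closure_le]
  rintro _ ⟨i, ⟨hi, hij⟩, rfl⟩
  exact ⟨Agen n i j, Subgroup.subset_closure ⟨i, j, hi, hij, hj, rfl⟩, rfl⟩

/-- Combing: a pure braid lies in the coset represented by `sigmaDesc n j 0 = 1`, because
the other representatives move the `j`-th string. -/
theorem pureBraid_inf_sigmaClosure_le (j : ℕ) (hj : j ≤ n) :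
    PureBraid n ⊓ sigmaClosure n j ≤
      (Subgroup.closure (pureGens n)).map (PureBraid n).subtype := by
  induction j with
  | zero =>
    intro g hg
    rw [show sigmaClosure n 0 = ⊥ by simp [sigmaClosure], inf_bot_eq, Subgroup.mem_bot] at hg
    rw [hg]
    exact one_mem _
  | succ j ih =>
    intro g hg
    obtain ⟨hgp, hg⟩ := Subgroup.mem_inf.mp hg
    obtain ⟨r, hr, hgr⟩ := exists_mul_sigmaDesc_inv_mem (Nat.succ_pos j) hj hg
    have hfix : braidPerm n (sigmaDesc n (j+1) r) (j+1) = j+1 := by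
      have h := sigmaClosure_sup_P_le_stabilizer hgr
      rw [Subgroup.mem_comap, MulAction.mem_stabilizer_iff, map_mul, map_inv,
        MonoidHom.mem_ker.mp hgp, one_mul, Equiv.Perm.smul_def, Equiv.Perm.inv_eq_iff_eq] at h
      exact h.symm
    obtain rfl : r = 0 := by
      by_contra h0
      rw [braidPerm_sigmaDesc (by omega) hr hj] at hfix
      omega
    rw [sigmaDesc, inv_one, mul_one, ← SetLike.mem_coe,
      Subgroup.coe_mul_of_left_le_normalizer_right _ _ (sigmaClosure_le_normalizer_P hj)] at hgr
    obtain ⟨b, hb, m, hm, rfl⟩ := hgr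
    have hmp : m ∈ PureBraid n := P_le_pureBraid _ hm
    have hbp : b ∈ PureBraid n := by simpa using mul_mem hgp (inv_mem hmp)
    exact mul_mem (ih (by omega) ⟨hbp, hb⟩) (P_le_map_closure_pureGens hj hm)

theorem pureBraid_le_map_closure_pureGens :
    PureBraid n ≤ (Subgroup.closure (pureGens n)).map (PureBraid n).subtype := by
  simpa [sigmaClosure_self] using pureBraid_inf_sigmaClosure_le (n := n) n le_rfl

theorem closure_pureGens : Subgroup.closure (pureGens n) = ⊤ := by
  refine eq_top_iff.mpr fun x _ => ?_
  obtain ⟨y, hy, hyx⟩ := pureBraid_le_map_closure_pureGens x.2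
  rwa [← Subtype.ext hyx]

theorem pureBraid_le_normalizer_P :
    PureBraid n ≤ Subgroup.normalizer (P n n : Set (BraidGroup n)) := by
  refine pureBraid_le_map_closure_pureGens.trans
    (Subgroup.map_le_iff_le_comap.mpr ((Subgroup.closure_le _).mpr ?_))
  rintro _ ⟨i, j, hi, hij, hjn, rfl⟩
  change A n i j ∈ Subgroup.normalizer (P n n : Set (BraidGroup n))
  rcases hjn.lt_or_eq with hjn | rfl
  · exact sigmaClosure_le_normalizer_P le_rfl
      (sigmaClosure_mono (by omega) (A_mem_sigmaClosure hi hij))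
  · exact Subgroup.le_normalizer (A_mem_P hi hij)

end PureGenerators

section Nabla

variable {n : ℕ} {nabla : ↥(PureBraid n) →* ↥(PureBraid n)}

instance : (PureBraid n).Normal := (braidPerm n).normal_ker

instance : ((P n n).subgroupOf (PureBraid n)).Normal :=
  (Subgroup.normal_subgroupOf_iff_le_normalizer (P_le_pureBraid n)).mpr pureBraid_le_normalizer_P

theorem IsNabla.iterate_Agen (hnabla : IsNabla n nabla) {i j : ℕ} (hi : 1 ≤ i) (hij : i < j)
    (hjn : j ≤ n) : nabla^[i] (Agen n i j) = 1 := by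
  induction i, hi using Nat.le_induction generalizing j with
  | base => exact hnabla.1 j hij hjn
  | succ i hi ih =>
    rw [Function.iterate_succ_apply, hnabla.2 (i+1) j (by omega) hij hjn]
    exact ih (by omega) (by omega)

theorem IsNabla.iterate_eq_one (hnabla : IsNabla n nabla) (α : ↥(PureBraid n)) :
    nabla^[n-1] α = 1 := by
  have hα : α ∈ Subgroup.closure (pureGens n) := closure_pureGens ▸ Subgroup.mem_top α
  induction hα using Subgroup.closure_induction with
  | mem _ hx =>
    obtain ⟨i, j, hi, hij, hjn, rfl⟩ := hx
    rw [show n - 1 = (n - 1 - i) + i by omega, Function.iterate_add_apply,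
      hnabla.iterate_Agen hi hij hjn, iterate_map_one]
  | one => exact iterate_map_one _ _
  | mul x y _ _ hx hy => rw [iterate_map_mul, hx, hy, one_mul]
  | inv x _ hx => rw [iterate_map_inv, hx, inv_one]

theorem IsNabla.mk_comp_eq_mk_comp_conjNormal (hnabla : IsNabla n nabla) :
    (QuotientGroup.mk' ((P n n).subgroupOf (PureBraid n))).comp nabla =
      (QuotientGroup.mk' _).comp (MulAut.conjNormal (piN n)⁻¹).toMonoidHom := by
  refine MonoidHom.eq_of_eqOn_dense closure_pureGens ?_
  rintro _ ⟨i, j, hi, hij, hjn, rfl⟩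
  rw [MonoidHom.comp_apply, MonoidHom.comp_apply, QuotientGroup.mk'_apply,
    QuotientGroup.mk'_apply, QuotientGroup.eq, Subgroup.mem_subgroupOf, Subgroup.coe_mul,
    Subgroup.coe_inv, MulEquiv.coe_toMonoidHom, MulAut.conjNormal_apply, inv_inv]
  change ((nabla (Agen n i j) : BraidGroup n))⁻¹ * ((piN n)⁻¹ * A n i j * piN n) ∈ P n n
  rcases hi.lt_or_eq with hi | rfl
  · have hconj := piN_conj_A (n := n) (i := i-1) (j := j-1) (by omega) (by omega) (by omega)
    rw [Nat.sub_add_cancel (by omega), Nat.sub_add_cancel (by omega)] at hconj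
    rw [hnabla.2 i j hi hij hjn]
    change (A n (i-1) (j-1))⁻¹ * _ ∈ _
    rw [inv_conj_eq_of_conj_eq hconj, inv_mul_cancel]
    exact one_mem _
  · rw [hnabla.1 j hij hjn, OneMemClass.coe_one, inv_one, one_mul]
    exact piN_inv_conj_A_one_mem hij hjn

theorem IsNabla.conj_commutator_mem_P_iff (hnabla : IsNabla n nabla) (κ : ↥(PureBraid n)) :
    (piN n)⁻¹ * (↑κ)⁻¹ * piN n * ↑κ ∈ P n n ↔ κ ∈ Kset n nabla := by
  set N := (P n n).subgroupOf (PureBraid n)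
  have hmod := DFunLike.congr_fun hnabla.mk_comp_eq_mk_comp_conjNormal κ⁻¹
  simp only [MonoidHom.comp_apply] at hmod
  have hconj : (piN n)⁻¹ * (↑κ)⁻¹ * piN n * ↑κ ∈ P n n ↔
      MulAut.conjNormal (piN n)⁻¹ κ⁻¹ * κ ∈ N := by
    rw [Subgroup.mem_subgroupOf, Subgroup.coe_mul, MulAut.conjNormal_apply, inv_inv,
      Subgroup.coe_inv]
  rw [hconj, ← QuotientGroup.eq_one_iff, QuotientGroup.mk_mul, ← QuotientGroup.mk'_apply,
    ← MulEquiv.coe_toMonoidHom, ← hmod, QuotientGroup.mk'_apply, ← QuotientGroup.mk_mul,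
    QuotientGroup.eq_one_iff, map_inv, Subgroup.Normal.mem_comm_iff inferInstance,
    mul_inv_map_mem_iff_exists_prod_iterate nabla hnabla.iterate_eq_one]
  rfl

end Nabla

theorem mem_W1_iff {n : ℕ} {w : BraidGroup n} : w ∈ W1 n ↔ (piN n)⁻¹ * w ∈ P n n :=
  ⟨by rintro ⟨b, hb, rfl⟩; simpa using hb, fun h => ⟨_, h, by group⟩⟩

theorem conj_mem_W1_iff_general (n : ℕ)
    (nabla : ↥(PureBraid n) →* ↥(PureBraid n)) (hnabla : IsNabla n nabla)
    (ω : BraidGroup n) (hω : ω ∈ W1 n) (κ : ↥(PureBraid n)) :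
    (↑κ)⁻¹ * ω * ↑κ ∈ W1 n ↔ κ ∈ Kset n nabla := by
  obtain ⟨b, hb, rfl⟩ := hω
  have hb' : (↑κ)⁻¹ * b * ↑κ ∈ P n n := by
    simpa using (Subgroup.mem_normalizer_iff.mp (pureBraid_le_normalizer_P (inv_mem κ.2)) b).mp hb
  rw [mem_W1_iff, show (piN n)⁻¹ * ((↑κ)⁻¹ * (piN n * b) * ↑κ) =
      ((piN n)⁻¹ * (↑κ)⁻¹ * piN n * ↑κ) * ((↑κ)⁻¹ * b * ↑κ) by group,
    Subgroup.mul_mem_cancel_right _ hb']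
  exact hnabla.conj_commutator_mem_P_iff κ

/-- For a woven braid `ω ∈ W_n^1` and a pure braid `κ ∈ P_n`,
the conjugate `κ⁻¹ ω κ` lies in `W_n^1` if and only if `κ ∈ K_n`. -/
theorem conj_mem_W1_iff (n : ℕ) (hn : 2 ≤ n)
    (nabla : ↥(PureBraid n) →* ↥(PureBraid n)) (hnabla : IsNabla n nabla)
    (ω : BraidGroup n) (hω : ω ∈ W1 n) (κ : ↥(PureBraid n)) :
    (↑κ)⁻¹ * ω * ↑κ ∈ W1 n ↔ κ ∈ Kset n nabla :=
  conj_mem_W1_iff_general n nabla hnabla ω hω κ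
end

section
/- There exists a group isomorphism f : B_n → B_n^{op} (the multiplicative opposite group of B_n) with f(σ_i) = op(σ_{n−i}) for all 1 ≤ i ≤ n−1; write inv(β) for the element of B_n underlying f(β), so that inv is an anti-automorphism of B_n reversing words and replacing σ_i by σ_{n−i}. Then inv maps W_n^1 onto itself: if ω ∈ W_n^1 then inv(ω) ∈ W_n^1. -/
/-! The anti-automorphism `inv` is well defined because the relations of `B_n` are symmetric
under `σ_i ↦ σ_{n-i}` and reversal of words, and it fixes `π_n = σ_1 ⋯ σ_{n-1}`. Hence
`inv (π_n β) = inv β · π_n = π_n (π_n⁻¹ inv(β) π_n)`, and it remains to see that conjugating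
`inv` by `π_n` preserves `P_n^n`. With `Δ = σ_{n-1} ⋯ σ_1` one computes
`Δ inv(A_{in}) Δ⁻¹ = A_{n-i,n}`, and `Δ π_n = A_{1n} A_{2n} ⋯ A_{n-1,n}` lies in `P_n^n`;
so `π_n⁻¹ inv(A_{in}) π_n = (Δ π_n)⁻¹ A_{n-i,n} (Δ π_n) ∈ P_n^n`. -/

namespace BraidGroup

open MulOpposite

variable {n : ℕ}

theorem mk_eq_one_of_mem_rels {r : FreeGroup ℕ} (hr : r ∈ braidRels n) :
    PresentedGroup.mk (braidRels n) r = 1 :=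
  (QuotientGroup.eq_one_iff r).mpr (Subgroup.subset_normalClosure hr)

theorem σ_eq_one {i : ℕ} (hi : i = 0 ∨ n ≤ i) : σ n i = 1 :=
  mk_eq_one_of_mem_rels (Or.inr (Or.inr ⟨i, hi, rfl⟩))

theorem σ_braid {i : ℕ} (h1 : 1 ≤ i) (h2 : i + 2 ≤ n) :
    σ n i * σ n (i + 1) * σ n i = σ n (i + 1) * σ n i * σ n (i + 1) := by
  have h := mk_eq_one_of_mem_rels (n := n) (Or.inl ⟨i, h1, h2, rfl⟩)
  rwa [map_mul, map_inv, mul_inv_eq_one] at h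

theorem σ_mul_comm {i j : ℕ} (h1 : 1 ≤ i) (h2 : i + 2 ≤ j) (h3 : j + 1 ≤ n) :
    σ n i * σ n j = σ n j * σ n i := by
  have h := mk_eq_one_of_mem_rels (n := n) (Or.inr (Or.inl ⟨i, j, h1, h2, h3, rfl⟩))
  rwa [map_mul, map_inv, mul_inv_eq_one] at h

variable (n) in
theorem reverse_rels :
    ∀ r ∈ braidRels n, FreeGroup.lift (fun i => op (σ n (n - i))) r = 1 := by
  rintro r (⟨i, h1, h2, rfl⟩ | ⟨i, j, h1, h2, h3, rfl⟩ | ⟨i, hi, rfl⟩)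
  · have hi : n - i = n - (i + 1) + 1 := by omega
    simp only [map_mul, map_inv, FreeGroup.lift_apply_of, mul_inv_eq_one, ← op_mul, hi]
    rw [op_inj, ← mul_assoc, ← mul_assoc, σ_braid (by omega) (by omega)]
  · simp only [map_mul, map_inv, FreeGroup.lift_apply_of, mul_inv_eq_one, ← op_mul]
    rw [op_inj, σ_mul_comm (by omega) (by omega) (by omega)]
  · rw [FreeGroup.lift_apply_of, σ_eq_one (by omega), op_one]

variable (n) in
/-- No case distinction is needed: `σ_0` and `σ_i` for `i ≥ n` are trivial, and so are their
images `σ_n` and `σ_0`. -/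
def reverseHom : BraidGroup n →* (BraidGroup n)ᵐᵒᵖ :=
  PresentedGroup.toGroup (reverse_rels n)

variable (n) in
/-- The anti-automorphism `inv` of the paper. -/
def rev (x : BraidGroup n) : BraidGroup n := (reverseHom n x).unop

variable (n) in
theorem reverseHom_σ (i : ℕ) : reverseHom n (σ n i) = op (σ n (n - i)) :=
  PresentedGroup.toGroup.of (reverse_rels n)

theorem rev_σ (i : ℕ) : rev n (σ n i) = σ n (n - i) := by
  rw [rev, reverseHom_σ, unop_op]

theorem rev_one : rev n 1 = 1 := by
  rw [rev, map_one, unop_one]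

theorem rev_mul (x y : BraidGroup n) : rev n (x * y) = rev n y * rev n x := by
  rw [rev, map_mul, unop_mul]; rfl

theorem rev_inv (x : BraidGroup n) : rev n x⁻¹ = (rev n x)⁻¹ := by
  rw [rev, map_inv, unop_inv]; rfl

theorem rev_rev (x : BraidGroup n) : rev n (rev n x) = x := by
  have h : ((MulEquiv.opOp (BraidGroup n)).symm.toMonoidHom.comp
      ((reverseHom n).op.comp (reverseHom n))) = MonoidHom.id (BraidGroup n) := by
    ext i
    show rev n (rev n (σ n i)) = σ n i
    rw [rev_σ, rev_σ]
    rcases le_or_gt i n with hi | hi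
    · rw [Nat.sub_sub_self hi]
    · rw [Nat.sub_eq_zero_of_le hi.le, Nat.sub_zero, σ_eq_one (Or.inr le_rfl),
        σ_eq_one (Or.inr hi.le)]
  exact DFunLike.congr_fun h x

variable (n) in
def reverse : BraidGroup n ≃* (BraidGroup n)ᵐᵒᵖ where
  toFun := reverseHom n
  invFun x := rev n x.unop
  left_inv := rev_rev
  right_inv x := unop_injective (rev_rev x.unop)
  map_mul' := map_mul _

variable (n) in
def asc (b : ℕ) : ℕ → BraidGroup n
  | 0 => 1
  | k + 1 => asc b k * σ n (b + k)

variable (n) in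
def desc (b : ℕ) : ℕ → BraidGroup n
  | 0 => 1
  | k + 1 => σ n (b + k) * desc b k

theorem asc_succ' (b k : ℕ) : asc n b (k + 1) = σ n b * asc n (b + 1) k := by
  induction k with
  | zero => simp [asc]
  | succ k ih => rw [asc, ih, asc, mul_assoc, show b + 1 + k = b + (k + 1) by omega]

theorem desc_succ' (b k : ℕ) : desc n b (k + 1) = desc n (b + 1) k * σ n b := by
  induction k with
  | zero => simp [desc]
  | succ k ih => rw [desc, ih, desc, mul_assoc, show b + 1 + k = b + (k + 1) by omega]

theorem desc_add (b k m : ℕ) : desc n b (k + m) = desc n (b + k) m * desc n b k := by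
  induction m with
  | zero => simp [desc]
  | succ m ih => rw [← add_assoc, desc, ih, desc, mul_assoc, add_assoc]

theorem rev_asc {b : ℕ} (hb : 1 ≤ b) :
    ∀ {k}, b + k ≤ n → rev n (asc n b k) = asc n (n + 1 - b - k) k
  | 0, _ => rev_one
  | k + 1, h => by
    rw [asc, rev_mul, rev_asc hb (by omega), rev_σ,
      show n + 1 - b - (k + 1) = n - (b + k) by omega, asc_succ',
      show n - (b + k) + 1 = n + 1 - b - k by omega]

theorem rev_desc {b : ℕ} (hb : 1 ≤ b) :
    ∀ {k}, b + k ≤ n → rev n (desc n b k) = desc n (n + 1 - b - k) k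
  | 0, _ => rev_one
  | k + 1, h => by
    rw [desc, rev_mul, rev_desc hb (by omega), rev_σ,
      show n + 1 - b - (k + 1) = n - (b + k) by omega, desc_succ',
      show n - (b + k) + 1 = n + 1 - b - k by omega]

theorem asc_eq_prod (b k : ℕ) : asc n b k = ((List.range' b k).map (σ n)).prod := by
  induction k with
  | zero => rfl
  | succ k ih => rw [asc, ih, List.range'_1_concat, List.map_append, List.prod_append]; simp

theorem piN_eq_asc (n : ℕ) : piN n = asc n 1 (n - 1) := by
  rw [asc_eq_prod, piN, piBraid]
  cases n with
  | zero => rfl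
  | succ m =>
    have h : (List.range' 1 m).filter (fun i => decide (1 ≤ i ∧ i ∉ partialSums [m + 1]))
        = List.range' 1 m :=
      List.filter_eq_self.mpr fun i hi => by
        simp only [List.mem_range'_1] at hi
        simp only [partialSums, List.map_nil, List.mem_singleton, decide_eq_true_eq]
        omega
    rw [List.range_eq_range', List.range'_succ, List.filter_cons_of_neg (by simp), h]
    rfl

theorem rev_piN : rev n (piN n) = piN n := by
  rw [piN_eq_asc]
  rcases Nat.eq_zero_or_pos n with rfl | hn
  · exact rev_one
  · rw [rev_asc le_rfl (by omega), show n + 1 - 1 - (n - 1) = 1 by omega]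

theorem A_eq_conj {i j : ℕ} (h : i < j) :
    A n i j = desc n (i + 1) (j - i - 1) * σ n i ^ 2 * (desc n (i + 1) (j - i - 1))⁻¹ := by
  obtain ⟨t, rfl⟩ : ∃ t, j = i + 1 + t := ⟨j - i - 1, by omega⟩
  rw [show i + 1 + t - i - 1 = t by omega]
  induction t with
  | zero => simp [A, desc]
  | succ t ih =>
    rw [← add_assoc, A, if_neg (by omega), ih (by omega), desc]
    group

theorem A_mem_P {i j : ℕ} (h1 : 1 ≤ i) (h2 : i < j) : A n i j ∈ P n j :=
  Subgroup.subset_closure ⟨i, Set.mem_Ico.mpr ⟨h1, h2⟩, rfl⟩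

theorem rev_A {i j : ℕ} (h1 : 1 ≤ i) (h2 : i < j) (hj : j ≤ n) :
    rev n (A n i j) = (desc n (n + 1 - j) (j - i - 1))⁻¹ * σ n (n - i) ^ 2 *
      desc n (n + 1 - j) (j - i - 1) := by
  rw [A_eq_conj h2, pow_two, rev_mul, rev_mul, rev_mul, rev_inv, rev_σ,
    rev_desc (by omega) (by omega), show n + 1 - (i + 1) - (j - i - 1) = n + 1 - j by omega,
    ← pow_two]
  group

theorem desc_mul_rev_A_mul_inv {i : ℕ} (h1 : 1 ≤ i) (h2 : i < n) :
    desc n 1 (n - 1) * rev n (A n i n) * (desc n 1 (n - 1))⁻¹ = A n (n - i) n := by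
  have hsplit :
      desc n 1 (n - 1) = desc n (n - i + 1) (i - 1) * σ n (n - i) * desc n 1 (n - i - 1) := by
    have h := desc_add (n := n) 1 (n - i - 1) i
    rw [show n - i - 1 + i = n - 1 by omega, show 1 + (n - i - 1) = n - i by omega] at h
    rw [h, ← desc_succ', show i - 1 + 1 = i by omega]
  rw [rev_A h1 h2 le_rfl, Nat.add_sub_cancel_left, A_eq_conj (by omega), hsplit,
    show n - (n - i) - 1 = i - 1 by omega]
  group

theorem desc_mul_asc_mem_P (j : ℕ) : desc n 1 (j - 1) * asc n 1 (j - 1) ∈ P n j := by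
  -- invariant: `σ_{j-1} ⋯ σ_1 · σ_1 ⋯ σ_m = A_{1j} ⋯ A_{mj} · σ_{j-1} ⋯ σ_{m+1}`
  have key : ∀ m ≤ j - 1,
      desc n 1 (j - 1) * asc n 1 m * (desc n (m + 1) (j - 1 - m))⁻¹ ∈ P n j := by
    intro m hm
    induction m with
    | zero => simp [asc]
    | succ m ih =>
      have hstep :
          desc n 1 (j - 1) * asc n 1 (m + 1) * (desc n (m + 1 + 1) (j - 1 - (m + 1)))⁻¹ =
            desc n 1 (j - 1) * asc n 1 m * (desc n (m + 1) (j - 1 - m))⁻¹ * A n (m + 1) j := by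
        rw [A_eq_conj (by omega), show j - (m + 1) - 1 = j - 1 - (m + 1) by omega,
          show j - 1 - m = j - 1 - (m + 1) + 1 by omega, desc_succ', asc, add_comm 1 m]
        group
      rw [hstep]
      exact mul_mem (ih (by omega)) (A_mem_P (by omega) (by omega))
  simpa [desc] using key (j - 1) le_rfl

theorem piN_inv_mul_rev_mul_piN_mem_P {b : BraidGroup n} (hb : b ∈ P n n) :
    (piN n)⁻¹ * rev n b * piN n ∈ P n n := by
  induction hb using Subgroup.closure_induction with
  | mem x hx =>
    obtain ⟨i, hi, rfl⟩ := hx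
    rw [Set.mem_Ico] at hi
    have hΘ : desc n 1 (n - 1) * piN n ∈ P n n := piN_eq_asc n ▸ desc_mul_asc_mem_P n
    have h : (piN n)⁻¹ * rev n (A n i n) * piN n =
        (desc n 1 (n - 1) * piN n)⁻¹ * A n (n - i) n * (desc n 1 (n - 1) * piN n) := by
      rw [← desc_mul_rev_A_mul_inv hi.1 hi.2]
      group
    rw [h]
    exact mul_mem (mul_mem (inv_mem hΘ) (A_mem_P (by omega) (by omega))) hΘ
  | one => simp [rev_one]
  | mul x y _ _ hx hy =>
    convert mul_mem hy hx using 1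
    rw [rev_mul]
    group
  | inv x _ hx =>
    convert inv_mem hx using 1
    rw [rev_inv]
    group

end BraidGroup

theorem inv_maps_W1_to_W1_general (n : ℕ) :
    ∃ f : BraidGroup n ≃* (BraidGroup n)ᵐᵒᵖ,
      (∀ i, 1 ≤ i → i ≤ n - 1 → f (σ n i) = MulOpposite.op (σ n (n - i))) ∧
      ∀ ω ∈ W1 n, (f ω).unop ∈ W1 n := by
  refine ⟨BraidGroup.reverse n, fun i _ _ => BraidGroup.reverseHom_σ n i, ?_⟩
  rintro ω ⟨b, hb, rfl⟩
  refine ⟨(piN n)⁻¹ * BraidGroup.rev n b * piN n,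
    BraidGroup.piN_inv_mul_rev_mul_piN_mem_P hb, ?_⟩
  show BraidGroup.rev n (piN n * b) = _
  rw [BraidGroup.rev_mul, BraidGroup.rev_piN]
  group

/-- There is a group isomorphism `f : B_n → B_nᵒᵖ` with
`f(σ_i) = op(σ_{n-i})` for `1 ≤ i ≤ n-1` (so `inv := unop ∘ f` is the
anti-automorphism of `B_n` reversing words and sending `σ_i ↦ σ_{n-i}`), and
`inv` maps `W_n^1` into itself. -/
theorem inv_maps_W1_to_W1 (n : ℕ) (hn : 2 ≤ n) :
    ∃ f : BraidGroup n ≃* (BraidGroup n)ᵐᵒᵖ,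
      (∀ i, 1 ≤ i → i ≤ n - 1 → f (σ n i) = MulOpposite.op (σ n (n - i))) ∧
      ∀ ω ∈ W1 n, (f ω).unop ∈ W1 n :=
  inv_maps_W1_to_W1_general n
end
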